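/- arXiv:2401.13922 — 2 statements merged into one kernel-verified Lean document; each statement's English description precedes it below -/
import Mathlib

section
/- Let n ≥ 0, N = 2^n, let g : ℕ → GF(2) with g 0 = 1, let G be the N×N upper-triangular Toeplitz matrix with generator sequence g, let F = [[1,0],[1,1]] and F^{⊗n} its Kronecker power, and let η : Fin N → GF(2) be any row vector. Then for every v : Fin N → GF(2), (((v + e_{N−1}) · G) + η) · F^{⊗n} = ((v · G) + η) · F^{⊗n} + 1, where e_{N−1} is the standard basis row vector with a 1 in the last position and 1 is the all-ones row vector. -/
/-- Arikan's `2 × 2` binary polarization kernel `F = [[1, 0], [1, 1]]` over GF(2). -/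
def polarKernel : Matrix (Fin 2) (Fin 2) (ZMod 2) := !![1, 0; 1, 1]

/-- The polar transform matrix `F^{⊗n}`: the `n`-fold Kronecker power of the polarization
kernel, realized as a `2^n × 2^n` matrix over GF(2). -/
def polarTransform : ∀ n : ℕ, Matrix (Fin (2 ^ n)) (Fin (2 ^ n)) (ZMod 2)
  | 0 => 1
  | n + 1 =>
    Matrix.reindex (finProdFinEquiv.trans (finCongr (by rw [pow_succ, Nat.mul_comm])))
      (finProdFinEquiv.trans (finCongr (by rw [pow_succ, Nat.mul_comm])))
      (Matrix.kroneckerMap (· * ·) polarKernel (polarTransform n))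

/-! The last precoder row is `e_{N-1}`, so flipping the last input bit flips only the last
input of the polar transform; the last row of `F^{⊗n}` is all ones, being a Kronecker product
of copies of the all-ones last row of `F`. -/

lemma toeplitz_row_eq_single_of_isTop {R : Type*} [Zero R] {N : ℕ} (g : ℕ → R)
    (G : Matrix (Fin N) (Fin N) R)
    (hG : ∀ i j : Fin N, G i j = if (i : ℕ) ≤ (j : ℕ) then g ((j : ℕ) - (i : ℕ)) else 0)
    {i : Fin N} (hi : IsTop i) : G i = Pi.single i (g 0) := by
  funext j
  rcases eq_or_ne j i with rfl | hji
  · simp [hG]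
  · have hlt : (j : ℕ) < i := Fin.lt_def.mp (lt_of_le_of_ne (hi j) hji)
    rw [hG, if_neg (by omega), Pi.single_eq_of_ne hji]

lemma isTop_two_pow_sub_one (n : ℕ) :
    IsTop (⟨2 ^ n - 1, Nat.sub_lt (Nat.two_pow_pos n) one_pos⟩ : Fin (2 ^ n)) :=
  fun j => Fin.mk_le_mk.mpr (by omega)

lemma polarKernel_one_apply (j : Fin 2) : polarKernel 1 j = 1 := by
  fin_cases j <;> rfl

lemma polarTransform_last_row (n : ℕ) :
    polarTransform n ⟨2 ^ n - 1, Nat.sub_lt (Nat.two_pow_pos n) one_pos⟩ = fun _ => 1 := by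
  induction n with
  | zero =>
    funext ⟨j, hj⟩
    obtain rfl : j = 0 := by simpa using hj
    rfl
  | succ n ih =>
    funext j
    have hlast : (finProdFinEquiv.trans (finCongr (by rw [pow_succ, Nat.mul_comm]))).symm
        (⟨2 ^ (n + 1) - 1, Nat.sub_lt (Nat.two_pow_pos (n + 1)) one_pos⟩ : Fin (2 ^ (n + 1))) =
        ((1 : Fin 2), (⟨2 ^ n - 1, Nat.sub_lt (Nat.two_pow_pos n) one_pos⟩ : Fin (2 ^ n))) := by
      rw [Equiv.symm_apply_eq]
      ext
      simp only [Equiv.trans_apply, finProdFinEquiv_apply_val, finCongr_apply, Fin.val_cast,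
        Fin.val_one, pow_succ]
      have := Nat.two_pow_pos n
      omega
    rw [polarTransform, Matrix.reindex_apply, Matrix.submatrix_apply, hlast,
      Matrix.kroneckerMap_apply, polarKernel_one_apply, ih, one_mul]

/-- **Repetition-node processing (Eq. (10)).** Flipping the last information-carrier bit before
the convolutional precoder `G` (upper-triangular Toeplitz, `g 0 = 1`) and the polar transform
`F^{⊗n}` flips every output bit: `(((v + e_{N-1}) · G) + η) · F^{⊗n} = ((v · G) + η) · F^{⊗n} + 1`. -/
theorem repetitionNode_flip_last_bit
    (n : ℕ) (g : ℕ → ZMod 2) (hg : g 0 = 1)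
    (G : Matrix (Fin (2 ^ n)) (Fin (2 ^ n)) (ZMod 2))
    (hG : ∀ i j : Fin (2 ^ n), G i j = if (i : ℕ) ≤ (j : ℕ) then g ((j : ℕ) - (i : ℕ)) else 0)
    (η : Fin (2 ^ n) → ZMod 2) (v : Fin (2 ^ n) → ZMod 2) :
    Matrix.vecMul
        (Matrix.vecMul
            (v + Pi.single (⟨2 ^ n - 1, Nat.sub_lt (Nat.two_pow_pos n) one_pos⟩ : Fin (2 ^ n))
              (1 : ZMod 2)) G + η)
        (polarTransform n) =
      Matrix.vecMul (Matrix.vecMul v G + η) (polarTransform n) + fun _ => 1 := by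
  set last : Fin (2 ^ n) := ⟨2 ^ n - 1, Nat.sub_lt (Nat.two_pow_pos n) one_pos⟩
  have hG_last : G last = Pi.single last 1 := by
    rw [toeplitz_row_eq_single_of_isTop g G hG (isTop_two_pow_sub_one n), hg]
  have hprecode :
      Matrix.vecMul (v + Pi.single last 1) G = Matrix.vecMul v G + Pi.single last 1 := by
    rw [Matrix.add_vecMul, Matrix.single_one_vecMul, Matrix.row, hG_last]
  rw [hprecode, add_right_comm, Matrix.add_vecMul, Matrix.single_one_vecMul, Matrix.row,
    polarTransform_last_row]
end

section
/- Let n ≥ 0, N = 2^n, let g : ℕ → GF(2), let G be the N×N upper-triangular Toeplitz matrix with generator sequence g, let F = [[1,0],[1,1]] and F^{⊗n} its Kronecker power, and let η : Fin N → GF(2). For any row vector v : Fin N → GF(2) with v_0 = 0, set β = ((v · G) + η) · F^{⊗n}. Then Σ_{j=0}^{N−1} β_j = Σ_{j=0}^{N−1} (η · F^{⊗n})_j; that is, β lies in the coset of the single-parity-check codebook determined by η · F^{⊗n}. -/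
/-!
The all-ones vector is mapped by `F` to the unit vector `e₀`, and Kronecker products act factorwise
on product vectors, so `F^{⊗n} 𝟙 = e₀`. Hence the parity of `w · F^{⊗n}` is `(w · F^{⊗n}) · 𝟙 = w₀`.
Since `G` is upper triangular, `(v · G)₀ = v₀ g₀ = 0`, so `β` and `η · F^{⊗n}` have the same parity.
-/

open Matrix

theorem Matrix.sum_kroneckerMap_mul_apply {R l m p q : Type*} [CommSemiring R] [Fintype m]
    [Fintype q] (A : Matrix l m R) (B : Matrix p q R) (i : l × p) :
    ∑ j, kroneckerMap (· * ·) A B i j = (∑ j, A i.1 j) * ∑ j, B i.2 j := by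
  rw [Fintype.sum_prod_type, Finset.sum_mul_sum]
  rfl

theorem Matrix.vecMul_apply_of_col_eq_zero {R n : Type*} [NonUnitalNonAssocSemiring R] [Fintype n]
    [DecidableEq n] (M : Matrix n n R) (v : n → R) (j : n) (hM : ∀ i, i ≠ j → M i j = 0) :
    (v ᵥ* M) j = v j * M j j := by
  rw [vecMul, dotProduct, Finset.sum_eq_single j (fun i _ hi ↦ by rw [hM i hi, mul_zero])
    (by simp)]

def polarIndexEquiv (n : ℕ) : Fin 2 × Fin (2 ^ n) ≃ Fin (2 ^ (n + 1)) :=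
  finProdFinEquiv.trans (finCongr (by rw [pow_succ, Nat.mul_comm]))

theorem polarIndexEquiv_apply_val (n : ℕ) (p : Fin 2 × Fin (2 ^ n)) :
    (polarIndexEquiv n p : ℕ) = p.2 + 2 ^ n * p.1 := rfl

theorem polarTransform_succ (n : ℕ) :
    polarTransform (n + 1) =
      reindex (polarIndexEquiv n) (polarIndexEquiv n)
        (kroneckerMap (· * ·) polarKernel (polarTransform n)) := rfl

theorem polarTransform_sum_row (n : ℕ) (i : Fin (2 ^ n)) :
    ∑ j, polarTransform n i j = if (i : ℕ) = 0 then 1 else 0 := by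
  induction n with
  | zero => simp [polarTransform, Fin.fin_one_eq_zero i, one_apply]
  | succ n ih =>
    obtain ⟨⟨a, b⟩, rfl⟩ := (polarIndexEquiv n).surjective i
    have hF : ∀ a : Fin 2, ∑ c, polarKernel a c = if (a : ℕ) = 0 then 1 else 0 := by decide
    rw [polarTransform_succ, ← (polarIndexEquiv n).sum_comp]
    simp only [reindex_apply, submatrix_apply, Equiv.symm_apply_apply]
    rw [Matrix.sum_kroneckerMap_mul_apply, hF, ih, polarIndexEquiv_apply_val,
      ite_zero_mul_ite_zero, one_mul]
    simp [and_comm]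

theorem polarTransform_mulVec_one (n : ℕ) :
    polarTransform n *ᵥ 1 = Pi.single ⟨0, Nat.two_pow_pos n⟩ 1 := by
  ext i
  rw [mulVec, dotProduct_one, polarTransform_sum_row, Pi.single_apply]
  simp only [Fin.ext_iff]

theorem sum_vecMul_polarTransform (n : ℕ) (w : Fin (2 ^ n) → ZMod 2) :
    ∑ j, (w ᵥ* polarTransform n) j = w ⟨0, Nat.two_pow_pos n⟩ := by
  rw [← dotProduct_one, ← dotProduct_mulVec, polarTransform_mulVec_one, dotProduct_single, mul_one]

/-- **SPC-node structure.** If the first information-carrier bit is frozen (`v 0 = 0`), then the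
node output `β = ((v · G) + η) · F^{⊗n}` lies in the coset of the single-parity-check codebook
determined by `η · F^{⊗n}`: the parities of `β` and of `η · F^{⊗n}` coincide. -/
theorem spcNode_parity
    (n : ℕ) (g : ℕ → ZMod 2)
    (G : Matrix (Fin (2 ^ n)) (Fin (2 ^ n)) (ZMod 2))
    (hG : ∀ i j : Fin (2 ^ n), G i j = if (i : ℕ) ≤ (j : ℕ) then g ((j : ℕ) - (i : ℕ)) else 0)
    (η : Fin (2 ^ n) → ZMod 2) (v : Fin (2 ^ n) → ZMod 2)
    (hv0 : v ⟨0, Nat.two_pow_pos n⟩ = 0) :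
    (∑ j, Matrix.vecMul (Matrix.vecMul v G + η) (polarTransform n) j) =
      ∑ j, Matrix.vecMul η (polarTransform n) j := by
  have hcol : ∀ i, i ≠ ⟨0, Nat.two_pow_pos n⟩ → G i ⟨0, Nat.two_pow_pos n⟩ = 0 := by
    intro i hi
    rw [hG, if_neg fun h ↦ hi (Fin.ext (Nat.le_zero.mp h))]
  rw [sum_vecMul_polarTransform, sum_vecMul_polarTransform, Pi.add_apply,
    Matrix.vecMul_apply_of_col_eq_zero G v _ hcol, hv0, zero_mul, zero_add]
end
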